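/- Let γ ∈ (−1,0) ∪ (0,1). Then the function F_{2,γ} satisfies: (i) for every t ∈ (0,∞) with t ≠ 1, F_{2,γ} is differentiable at t with F_{2,γ}'(t) = −[(3+(2+γ²)t²+3t⁴)(|1−t|^γ − (1+t)^γ) + 3γ t (1+t²)(|1−t|^γ + (1+t)^γ)]/(γ(2+γ)(4+γ) t⁴); (ii) F_{2,γ}'(1/t) = t^{4−γ} F_{2,γ}'(t) for all t ∈ (0,∞) with t ≠ 1; (iii) lim_{t→0+} F_{2,γ}(t) = 0 and lim_{t→0+} F_{2,γ}'(t) = 0; (iv) lim_{t→+∞} F_{2,γ}(t) = 2(2−γ)/(3(1+γ)); (v) F_{2,γ}'(t) > 0 for every t ∈ (0,∞) with t ≠ 1; (vi) for every t ∈ (0,∞) with t ≠ 1, F_{2,γ} satisfies the ODE t F_{2,γ}'(t) − (1+γ) F_{2,γ}(t) = t^{−1} F_{1,γ}'(t) − 2(2−γ)/3. -/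

import Mathlib

/-!
Parts (i), (ii) and (vi) are direct computations with `A = |1-t|^γ`, `B = (1+t)^γ`,
`A' = γA/(t-1)` and `B' = γB/(1+t)`.

For the limits, expand `(1 ± s)^γ` to fourth order with the binomial series:
`(1+s)^γ = T(s) + s⁴ r(s)` with `r(s) → 0` (`taylor4`, `taylor4Rem`). After this substitution the
polynomial part of the numerator of `F₂(s)` (resp. `F₂'(s)`) is divisible by `s⁴`, so both tend
to `0` as `s → 0+`; the same expansion applied to `F₂(1/s)` gives the limit at `+∞`.

For positivity, on `(0,1)` one has `F₂'(x) = -N(x)/(γ(2+γ)(4+γ)x⁴)` with `N(x) = φ(x) - φ(-x)`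
and `φ(x) = P(x)(1-x)^γ` for a quartic `P`. Then `N(0) = N'(0) = N''(0) = 0`, and the derivative
of `N'(x)/x` is `(2+γ)(4+γ) x S(x)` with `γ S(x) < 0` (`slopeDerivFactor`). Hence `-γ N'(x)/x`,
then `-γ N'`, then `-γ N` are positive on `(0,1)`, which is `F₂' > 0` there; the symmetry (ii)
carries this over to `(1,∞)`.
-/

open Real Set Filter Topology

noncomputable section

namespace GSQGaux

/-- The auxiliary function `F_{1,γ}`. -/
def F1 (γ t : ℝ) : ℝ :=
  (2*γ*(2+γ)*t - (1+γ-t)*(1+t)*(1+t)^γ + (1-t)*(1+γ+t)*|1-t|^γ) /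
    (γ*(1+γ)*(2+γ)*t)

/-- The auxiliary function `F_{2,γ}`. -/
def F2 (γ t : ℝ) : ℝ :=
  (1/(3*γ*(1+γ)*(2+γ)*(4+γ)*t^3)) *
    (2*γ*(2-γ)*(2+γ)*(4+γ)*t^3
      + 3*(1+γ+(2+γ-γ^2)*t^2 - 3*t^4)*(|1-t|^γ - (1+t)^γ)
      + 3*((γ+γ^2)*t - 3*γ*t^3)*(|1-t|^γ + (1+t)^γ))

/-- The explicit formula for the derivative of `F_{2,γ}`:
`F_{2,γ}'(t) = -[(3+(2+γ²)t²+3t⁴)(|1-t|^γ - (1+t)^γ) + 3γt(1+t²)(|1-t|^γ + (1+t)^γ)]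
  / (γ(2+γ)(4+γ)t⁴)`. -/
def F2d (γ t : ℝ) : ℝ :=
  -(((3+(2+γ^2)*t^2+3*t^4)*(|1-t|^γ - (1+t)^γ)
      + 3*γ*t*(1+t^2)*(|1-t|^γ + (1+t)^γ)) / (γ*(2+γ)*(4+γ)*t^4))

lemma hasDerivAt_rpow_of_pos {u : ℝ → ℝ} {u' t : ℝ} (γ : ℝ) (hu : HasDerivAt u u' t)
    (ht : 0 < u t) : HasDerivAt (fun s => u s ^ γ) (γ * u t ^ γ / u t * u') t := by
  convert hu.rpow_const (p := γ) (Or.inl ht.ne') using 1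
  rw [rpow_sub_one ht.ne']
  ring

lemma hasDerivAt_one_add_rpow (γ : ℝ) {t : ℝ} (ht : -1 < t) :
    HasDerivAt (fun s => (1 + s) ^ γ) (γ * (1 + t) ^ γ / (1 + t)) t := by
  simpa using hasDerivAt_rpow_of_pos γ ((hasDerivAt_id' t).const_add 1) (by linarith)

lemma hasDerivAt_one_sub_rpow (γ : ℝ) {t : ℝ} (ht : t < 1) :
    HasDerivAt (fun s => (1 - s) ^ γ) (γ * (1 - t) ^ γ / (t - 1)) t := by
  convert hasDerivAt_rpow_of_pos γ ((hasDerivAt_id' t).const_sub 1) (sub_pos.2 ht) using 1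
  have : t - 1 ≠ 0 := by linarith
  have : 1 - t ≠ 0 := by linarith
  field_simp
  ring

lemma hasDerivAt_abs_one_sub_rpow (γ : ℝ) {t : ℝ} (ht : t ≠ 1) :
    HasDerivAt (fun s => |1 - s| ^ γ) (γ * |1 - t| ^ γ / (t - 1)) t := by
  rcases ht.lt_or_gt with ht | ht
  · rw [abs_of_pos (sub_pos.2 ht)]
    refine (hasDerivAt_one_sub_rpow γ ht).congr_of_eventuallyEq ?_
    filter_upwards [eventually_lt_nhds ht] with s hs
    rw [abs_of_pos (sub_pos.2 hs)]
  · rw [abs_of_neg (sub_neg.2 ht), neg_sub]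
    have h := hasDerivAt_rpow_of_pos γ ((hasDerivAt_id' t).sub_const 1) (sub_pos.2 ht)
    refine (by simpa using h : HasDerivAt (fun s => (s - 1) ^ γ) _ t).congr_of_eventuallyEq ?_
    filter_upwards [eventually_gt_nhds ht] with s hs
    rw [abs_of_neg (sub_neg.2 hs), neg_sub]

def taylor4 (γ s : ℝ) : ℝ :=
  1 + γ*s + γ*(γ-1)/2*s^2 + γ*(γ-1)*(γ-2)/6*s^3 + γ*(γ-1)*(γ-2)*(γ-3)/24*s^4

def taylor4Rem (γ s : ℝ) : ℝ := ((1 + s) ^ γ - taylor4 γ s) / s ^ 4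

lemma binomialSeries_partialSum_five (γ : ℝ) :
    (binomialSeries ℝ γ).partialSum 5 = taylor4 γ := by
  ext s
  simp [taylor4, FormalMultilinearSeries.partialSum, Finset.sum_range_succ, binomialSeries,
    Ring.choose_eq_smul, ← Polynomial.aeval_eq_smeval, descPochhammer_succ_right,
    Nat.factorial, map_ofNat]
  ring

lemma one_add_rpow_sub_taylor4_isBigO (γ : ℝ) :
    (fun s => (1 + s) ^ γ - taylor4 γ s) =O[𝓝 0] fun s => s ^ 5 := by
  have h := (one_add_rpow_hasFPowerSeriesAt_zero (a := γ)).isBigO_sub_partialSum_pow 5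
  simp only [zero_add, binomialSeries_partialSum_five, Real.norm_eq_abs, ← abs_pow] at h
  exact h.of_abs_right

lemma tendsto_taylor4Rem (γ : ℝ) : Tendsto (taylor4Rem γ) (𝓝 0) (𝓝 0) := by
  refine Asymptotics.IsBigO.trans_tendsto ?_ (tendsto_id (x := 𝓝 (0:ℝ)))
  have := (one_add_rpow_sub_taylor4_isBigO γ).mul
    (Asymptotics.isBigO_refl (fun s : ℝ => (s ^ 4)⁻¹) _)
  refine this.congr (fun s => rfl) (fun s => ?_)
  rcases eq_or_ne s 0 with rfl | hs
  · simp
  · field_simp; rfl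

lemma one_add_rpow_eq (γ : ℝ) {s : ℝ} (hs : s ≠ 0) :
    (1 + s) ^ γ = taylor4 γ s + s ^ 4 * taylor4Rem γ s := by
  unfold taylor4Rem; field_simp; ring

lemma one_sub_rpow_eq (γ : ℝ) {s : ℝ} (hs : s ≠ 0) :
    (1 - s) ^ γ = taylor4 γ (-s) + s ^ 4 * taylor4Rem γ (-s) := by
  simpa [sub_eq_add_neg, Even.neg_pow (by decide : Even 4)]
    using one_add_rpow_eq γ (neg_ne_zero.2 hs)

lemma tendsto_comp_taylor4Rem (γ : ℝ) {f : ℝ → ℝ → ℝ → ℝ}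
    (hf : Continuous fun p : ℝ × ℝ × ℝ => f p.1 p.2.1 p.2.2) :
    Tendsto (fun s => f s (taylor4Rem γ s) (taylor4Rem γ (-s))) (𝓝[>] 0) (𝓝 (f 0 0 0)) := by
  have hneg := (tendsto_taylor4Rem γ).comp (continuous_neg.tendsto' (0:ℝ) 0 neg_zero)
  exact ((hf.tendsto (0, 0, 0)).comp (tendsto_id.prodMk_nhds
    ((tendsto_taylor4Rem γ).prodMk_nhds hneg))).mono_left nhdsWithin_le_nhds

lemma tendsto_F2_nhdsGT_zero (γ : ℝ) : Tendsto (F2 γ) (𝓝[>] 0) (𝓝 0) := by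
  have h := tendsto_comp_taylor4Rem γ (f := fun s u v => s / (3*γ*(1+γ)*(2+γ)*(4+γ)) *
      (γ*(γ+1)*(γ-2)*(γ-4)/4 * ((γ^2+4*γ+7)*s - 3*(γ-1)*s^3)
        + 3*(1+γ+(2+γ-γ^2)*s^2 - 3*s^4)*(v - u) + 3*((γ+γ^2)*s - 3*γ*s^3)*(v + u)))
    (by fun_prop)
  rw [zero_div, zero_mul] at h
  refine h.congr' (eventually_of_mem (Ioo_mem_nhdsGT one_pos) fun s hs => ?_)
  have hs0 : s ≠ 0 := hs.1.ne'
  rw [F2, abs_of_pos (sub_pos.2 hs.2), one_sub_rpow_eq γ hs0, one_add_rpow_eq γ hs0, taylor4,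
    taylor4]
  field_simp
  ring

lemma tendsto_F2d_nhdsGT_zero (γ : ℝ) : Tendsto (F2d γ) (𝓝[>] 0) (𝓝 0) := by
  have h := tendsto_comp_taylor4Rem γ (f := fun s u v =>
      -((γ*(γ+1)*(γ-2)*(γ-4)/12 * (3*(γ-1)*s^3 - (γ+11)*s)
        + (3+(2+γ^2)*s^2+3*s^4)*(v - u) + 3*γ*s*(1+s^2)*(v + u)) / (γ*(2+γ)*(4+γ))))
    (by fun_prop)
  simp only [ne_eq, OfNat.ofNat_ne_zero, not_false_eq_true, zero_pow, mul_zero, sub_self,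
    add_zero, zero_div, neg_zero] at h
  refine h.congr' (eventually_of_mem (Ioo_mem_nhdsGT one_pos) fun s hs => ?_)
  have hs0 : s ≠ 0 := hs.1.ne'
  rw [F2d, abs_of_pos (sub_pos.2 hs.2), one_sub_rpow_eq γ hs0, one_add_rpow_eq γ hs0, taylor4,
    taylor4]
  field_simp
  ring

lemma tendsto_F2_atTop {γ : ℝ} (hγ : -1 < γ) (hγ3 : γ < 3) (hγ0 : γ ≠ 0) :
    Tendsto (F2 γ) atTop (𝓝 (2*(2-γ)/(3*(1+γ)))) := by
  have h := tendsto_comp_taylor4Rem γ (f := fun s u v =>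
      2*(2-γ)/(3*(1+γ)) + s ^ (3 - γ) / (3*γ*(1+γ)*(2+γ)*(4+γ)) *
      (γ*(γ-2)/4 * ((γ^3+16*γ^2+11*γ+20)*s + (γ-1)*(γ-4)*(γ+1)^2*s^3)
        + 3*((1+γ)*s^4 + (2+γ-γ^2)*s^2 - 3)*(v - u) + 3*((γ+γ^2)*s^3 - 3*γ*s)*(v + u)))
    (by fun_prop (disch := linarith))
  rw [zero_rpow (by linarith), zero_div, zero_mul, add_zero] at h
  suffices h' : Tendsto (fun s => F2 γ s⁻¹) (𝓝[>] 0) (𝓝 (2*(2-γ)/(3*(1+γ)))) by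
    simpa [Function.comp_def] using h'.comp tendsto_inv_atTop_nhdsGT_zero
  refine h.congr' (eventually_of_mem (Ioo_mem_nhdsGT one_pos) fun s hs => ?_)
  have hs0 : s ≠ 0 := hs.1.ne'
  have : 1 + γ ≠ 0 := by linarith
  have : 2 + γ ≠ 0 := by linarith
  have : 4 + γ ≠ 0 := by linarith
  have : s ^ γ ≠ 0 := (rpow_pos_of_pos hs.1 γ).ne'
  have hA : |1 - s⁻¹| = (1 - s) / s := by
    rw [abs_of_neg (sub_neg.2 ((one_lt_inv₀ hs.1).2 hs.2))]
    field_simp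
    ring
  have hB : 1 + s⁻¹ = (1 + s) / s := by field_simp; ring
  have hP : s ^ (3 - γ) = s ^ 3 / s ^ γ := by rw [rpow_sub hs.1]; norm_num
  dsimp only
  rw [F2, hA, hB, div_rpow (sub_pos.2 hs.2).le hs.1.le, div_rpow (by linarith [hs.1]) hs.1.le, hP,
    one_sub_rpow_eq γ hs0, one_add_rpow_eq γ hs0, taylor4, taylor4]
  field_simp
  ring

section Derivatives

variable {γ t : ℝ}

def F1d (γ t : ℝ) : ℝ :=
  ((1+t^2-γ*t)*(1+t)^γ - (1+t^2+γ*t)*|1-t|^γ) / (γ*(2+γ)*t^2)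

lemma hasDerivAt_F1 (hγ : -1 < γ) (hγ0 : γ ≠ 0) (ht : 0 < t) (ht1 : t ≠ 1) :
    HasDerivAt (F1 γ) (F1d γ t) t := by
  have hA := hasDerivAt_abs_one_sub_rpow γ ht1
  have hB := hasDerivAt_one_add_rpow γ (by linarith : -1 < t)
  have hX := hasDerivAt_id' t
  have : 1 + γ ≠ 0 := by linarith
  have : 2 + γ ≠ 0 := by linarith
  have h := (((hX.const_mul (2*γ*(2+γ))).sub
    (((hX.const_sub (1+γ)).mul (hX.const_add 1)).mul hB)).add
    (((hX.const_sub 1).mul (hX.const_add (1+γ))).mul hA)).div (hX.const_mul (γ*(1+γ)*(2+γ)))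
    (by positivity)
  simp only [Pi.add_apply, Pi.sub_apply, Pi.mul_apply] at h
  refine h.congr_deriv ?_
  have : t - 1 ≠ 0 := sub_ne_zero.2 ht1
  have : 1 + t ≠ 0 := by linarith
  rw [F1d]
  field_simp
  ring

lemma hasDerivAt_F2 (hγ : -1 < γ) (hγ0 : γ ≠ 0) (ht : 0 < t) (ht1 : t ≠ 1) :
    HasDerivAt (F2 γ) (F2d γ t) t := by
  have hA := hasDerivAt_abs_one_sub_rpow γ ht1
  have hB := hasDerivAt_one_add_rpow γ (by linarith : -1 < t)
  have hX := hasDerivAt_id' t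
  have : 1 + γ ≠ 0 := by linarith
  have : 2 + γ ≠ 0 := by linarith
  have : 4 + γ ≠ 0 := by linarith
  have hcoeffA := ((((hasDerivAt_pow 2 t).const_mul (2+γ-γ^2)).const_add (1+γ)).sub
    ((hasDerivAt_pow 4 t).const_mul 3)).const_mul 3
  have hcoeffB := ((hX.const_mul (γ+γ^2)).sub ((hasDerivAt_pow 3 t).const_mul (3*γ))).const_mul 3
  have h := ((hasDerivAt_const t (1:ℝ)).div
    ((hasDerivAt_pow 3 t).const_mul (3*γ*(1+γ)*(2+γ)*(4+γ))) (by simp [*, ht.ne'])).mul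
    ((((hasDerivAt_pow 3 t).const_mul (2*γ*(2-γ)*(2+γ)*(4+γ))).add (hcoeffA.mul (hA.sub hB))).add
      (hcoeffB.mul (hA.add hB)))
  simp only [Pi.add_apply, Pi.sub_apply, Pi.mul_apply, Pi.div_apply] at h
  refine h.congr_deriv ?_
  have : t - 1 ≠ 0 := sub_ne_zero.2 ht1
  have : 1 + t ≠ 0 := by linarith
  rw [F2d]
  field_simp
  ring

lemma F2d_one_div (ht : 0 < t) : F2d γ (1/t) = t ^ (4 - γ) * F2d γ t := by
  have htγ : t ^ γ ≠ 0 := (rpow_pos_of_pos ht γ).ne'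
  have hA : |1 - 1/t| ^ γ = |1 - t| ^ γ / t ^ γ := by
    rw [← div_rpow (abs_nonneg _) ht.le, one_sub_div ht.ne', abs_div, abs_of_pos ht, abs_sub_comm]
  have hB : (1 + 1/t) ^ γ = (1 + t) ^ γ / t ^ γ := by
    rw [← div_rpow (by linarith) ht.le, one_add_div ht.ne', add_comm t]
  have hP : t ^ (4 - γ) = t ^ 4 / t ^ γ := by rw [rpow_sub ht]; norm_num
  have : t ≠ 0 := ht.ne'
  rw [F2d, F2d, hA, hB, hP]
  field_simp
  ring

lemma F2d_ode (hγ : -1 < γ) (hγ0 : γ ≠ 0) (ht : 0 < t) :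
    t * F2d γ t - (1+γ) * F2 γ t = t⁻¹ * F1d γ t - 2*(2-γ)/3 := by
  have : 1 + γ ≠ 0 := by linarith
  have : 2 + γ ≠ 0 := by linarith
  have : 4 + γ ≠ 0 := by linarith
  have : t ≠ 0 := ht.ne'
  rw [F1d, F2, F2d]
  field_simp
  ring

end Derivatives

lemma pos_of_tendsto_zero_of_deriv_pos {f f' : ℝ → ℝ} {a : ℝ}
    (hlim : Tendsto f (𝓝[>] 0) (𝓝 0)) (hf : ∀ x ∈ Ioo 0 a, HasDerivAt f (f' x) x)
    (hf' : ∀ x ∈ Ioo 0 a, 0 < f' x) {x : ℝ} (hx : x ∈ Ioo 0 a) : 0 < f x := by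
  have hmono : StrictMonoOn f (Ioo 0 a) :=
    strictMonoOn_of_deriv_pos (convex_Ioo 0 a)
      (fun y hy => (hf y hy).continuousAt.continuousWithinAt)
      (fun y hy => by rw [interior_Ioo] at hy; rw [(hf y hy).deriv]; exact hf' y hy)
  have hx2 : x / 2 ∈ Ioo 0 a := ⟨by linarith [hx.1], by linarith [hx.1, hx.2]⟩
  have hle : 0 ≤ f (x / 2) := by
    refine le_of_tendsto hlim ?_
    filter_upwards [Ioo_mem_nhdsGT hx2.1] with y hy
    exact (hmono ⟨hy.1, hy.2.trans hx2.2⟩ hx2 hy.2).le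
  exact hle.trans_lt (hmono hx2 hx (by linarith [hx.1]))

lemma mul_rpow_sub_one_pos {γ p : ℝ} (hγ : γ ≠ 0) (hp : 1 < p) : 0 < γ * (p ^ γ - 1) := by
  rcases hγ.lt_or_gt with hγ | hγ
  · exact mul_pos_of_neg_of_neg hγ (sub_neg.2 (rpow_lt_one_of_one_lt_of_neg hp hγ))
  · exact mul_pos hγ (sub_pos.2 (one_lt_rpow hp hγ))

def slopeDerivFactor (γ x : ℝ) : ℝ :=
  ((1-γ)*(3-γ) - 3*(2-γ)*x + 3*x^2) * (1-x)^γ / (1-x)^2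
    - ((1-γ)*(3-γ) + 3*(2-γ)*x + 3*x^2) * (1+x)^γ / (1+x)^2

lemma mul_slopeDerivFactor_neg {γ x : ℝ} (hγ : γ ∈ Ioo (-1) 1) (hγ0 : γ ≠ 0)
    (hx : x ∈ Ioo 0 1) : γ * slopeDerivFactor γ x < 0 := by
  obtain ⟨hx0, hx1⟩ := hx
  have h1x : 0 < 1 - x := sub_pos.2 hx1
  have hA : 0 < (1 - x) ^ γ := rpow_pos_of_pos h1x γ
  have hB : (1 + x) ^ γ = ((1 + x) / (1 - x)) ^ γ * (1 - x) ^ γ := by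
    rw [div_rpow (by linarith) h1x.le, div_mul_cancel₀ _ hA.ne']
  have hρ : 0 < (1-γ)*(3-γ) + 3*(2-γ)*x + 3*x^2 := by nlinarith [hγ.2]
  have hp : 0 < γ * (((1 + x) / (1 - x)) ^ γ - 1) :=
    mul_rpow_sub_one_pos hγ0 ((one_lt_div h1x).2 (by linarith))
  have hpoly : 0 < 2 * γ^2 * x * (5 - 2*γ - 3*x^2) := by
    have := hγ.2; have : 0 < γ ^ 2 := by positivity
    have : 0 < 5 - 2*γ - 3*x^2 := by nlinarith
    positivity
  -- With `p = (1+x)/(1-x) > 1`, write `(1+x)^γ = p^γ (1-x)^γ`; both summands below then have the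
  -- sign of `γ`, the second one coming from `ρ₊(1-x)² - ρ₋(1+x)² = 2γx(5 - 2γ - 3x²)`.
  have key : γ * slopeDerivFactor γ x =
      -((1 - x) ^ γ * ((1-γ)*(3-γ) + 3*(2-γ)*x + 3*x^2) * (1-x)^2
        * (γ * (((1 + x) / (1 - x)) ^ γ - 1)) + (1 - x) ^ γ * (2 * γ^2 * x * (5 - 2*γ - 3*x^2)))
      / ((1-x)^2 * (1+x)^2) := by
    rw [slopeDerivFactor, hB]
    field_simp
    ring
  rw [key, neg_div]
  exact neg_neg_of_pos (by positivity)

def quartic (γ x : ℝ) : ℝ := 3 + 3*γ*x + (2+γ^2)*x^2 + 3*γ*x^3 + 3*x^4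

def quartic' (γ x : ℝ) : ℝ := 3*γ + 2*(2+γ^2)*x + 9*γ*x^2 + 12*x^3

def quartic'' (γ x : ℝ) : ℝ := 2*(2+γ^2) + 18*γ*x + 36*x^2

def phi (γ x : ℝ) : ℝ := quartic γ x * (1-x)^γ

def phi' (γ x : ℝ) : ℝ := (quartic' γ x - γ * quartic γ x / (1-x)) * (1-x)^γ

def phi'' (γ x : ℝ) : ℝ :=
  (quartic'' γ x - 2*γ * quartic' γ x / (1-x) + γ*(γ-1) * quartic γ x / (1-x)^2) * (1-x)^γ

section Phi

variable {γ x : ℝ}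

lemma hasDerivAt_quartic : HasDerivAt (quartic γ) (quartic' γ x) x := by
  refine (((((hasDerivAt_id' x).const_mul (3*γ)).const_add 3).add
    ((hasDerivAt_pow 2 x).const_mul (2+γ^2))).add ((hasDerivAt_pow 3 x).const_mul (3*γ))).add
    ((hasDerivAt_pow 4 x).const_mul 3) |>.congr_deriv ?_
  rw [quartic']
  push_cast
  ring

lemma hasDerivAt_quartic' : HasDerivAt (quartic' γ) (quartic'' γ x) x := by
  refine ((((hasDerivAt_id' x).const_mul (2*(2+γ^2))).const_add (3*γ)).add
    ((hasDerivAt_pow 2 x).const_mul (9*γ))).add ((hasDerivAt_pow 3 x).const_mul 12)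
    |>.congr_deriv ?_
  rw [quartic'']
  push_cast
  ring

lemma hasDerivAt_phi (hx : x < 1) : HasDerivAt (phi γ) (phi' γ x) x := by
  refine (hasDerivAt_quartic.mul (hasDerivAt_one_sub_rpow γ hx)).congr_deriv ?_
  have : x - 1 ≠ 0 := by linarith
  have : 1 - x ≠ 0 := by linarith
  rw [phi']
  field_simp
  ring

lemma hasDerivAt_phi' (hx : x < 1) : HasDerivAt (phi' γ) (phi'' γ x) x := by
  have : x - 1 ≠ 0 := by linarith
  have : 1 - x ≠ 0 := by linarith
  refine ((hasDerivAt_quartic'.sub ((hasDerivAt_quartic.const_mul γ).div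
    ((hasDerivAt_id' x).const_sub 1) this)).mul (hasDerivAt_one_sub_rpow γ hx)).congr_deriv ?_
  simp only [Pi.sub_apply, Pi.div_apply]
  rw [phi'']
  field_simp
  ring

end Phi

section Positivity

variable {γ x : ℝ}

lemma hasDerivAt_phi_sub_phi_neg (hx : x ∈ Ioo (-1) 1) :
    HasDerivAt (fun y => phi γ y - phi γ (-y)) (phi' γ x + phi' γ (-x)) x := by
  have h := (hasDerivAt_phi (γ := γ) (x := -x) (by linarith [hx.1])).comp x (hasDerivAt_neg x)
  exact ((hasDerivAt_phi hx.2).sub h).congr_deriv (by ring)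

lemma hasDerivAt_phi'_add_phi'_neg (hx : x ∈ Ioo (-1) 1) :
    HasDerivAt (fun y => phi' γ y + phi' γ (-y)) (phi'' γ x - phi'' γ (-x)) x := by
  have h := (hasDerivAt_phi' (γ := γ) (x := -x) (by linarith [hx.1])).comp x (hasDerivAt_neg x)
  exact ((hasDerivAt_phi' hx.2).add h).congr_deriv (by ring)

lemma hasDerivAt_phi'_add_phi'_neg_div (hx : x ∈ Ioo 0 1) :
    HasDerivAt (fun y => (phi' γ y + phi' γ (-y)) / y)
      ((2+γ)*(4+γ) * x * slopeDerivFactor γ x) x := by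
  refine ((hasDerivAt_phi'_add_phi'_neg ⟨by linarith [hx.1], hx.2⟩).div (hasDerivAt_id' x)
    hx.1.ne').congr_deriv ?_
  have : 1 - x ≠ 0 := by linarith [hx.2]
  have : 1 + x ≠ 0 := by linarith [hx.1]
  have : x ≠ 0 := hx.1.ne'
  simp only [phi', phi'', slopeDerivFactor, quartic, quartic', quartic'', sub_neg_eq_add]
  field_simp
  ring

lemma tendsto_phi'_add_phi'_neg_div :
    Tendsto (fun y => (phi' γ y + phi' γ (-y)) / y) (𝓝[>] 0) (𝓝 0) := by
  have h :=
    (hasDerivAt_phi'_add_phi'_neg (γ := γ) (x := 0) (by norm_num)).tendsto_slope_zero_right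
  have h0 : phi' γ 0 = 0 := by norm_num [phi', quartic, quartic']; ring
  simpa [h0, div_eq_inv_mul] using h

lemma F2d_eq_phi (hx : x < 1) :
    F2d γ x = -((phi γ x - phi γ (-x)) / (γ*(2+γ)*(4+γ)*x^4)) := by
  rw [F2d, phi, phi, quartic, quartic, abs_of_pos (sub_pos.2 hx), sub_neg_eq_add]
  ring

lemma F2d_pos_of_lt_one (hγ : γ ∈ Ioo (-1) 1) (hγ0 : γ ≠ 0) (hx : x ∈ Ioo 0 1) :
    0 < F2d γ x := by
  have hmem : ∀ y ∈ Ioo (0:ℝ) 1, y ∈ Ioo (-1) 1 := fun y hy => ⟨by linarith [hy.1], hy.2⟩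
  have h1 : ∀ y ∈ Ioo (0:ℝ) 1, 0 < -γ * ((phi' γ y + phi' γ (-y)) / y) :=
    fun y hy => pos_of_tendsto_zero_of_deriv_pos
      (by simpa using tendsto_phi'_add_phi'_neg_div.const_mul (-γ))
      (fun z hz => (hasDerivAt_phi'_add_phi'_neg_div hz).const_mul (-γ))
      (fun z hz => by
        have := mul_slopeDerivFactor_neg hγ hγ0 hz
        have : 0 < (2+γ)*(4+γ)*z := mul_pos (by nlinarith [hγ.1]) hz.1
        nlinarith) hy
  have h2 : 0 < -γ * (phi γ x - phi γ (-x)) := by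
    refine pos_of_tendsto_zero_of_deriv_pos ?_
      (fun z hz => (hasDerivAt_phi_sub_phi_neg (hmem z hz)).const_mul (-γ)) (fun z hz => ?_) hx
    · have h := ((hasDerivAt_phi_sub_phi_neg (γ := γ) (x := 0) (by norm_num)).continuousAt.tendsto
        |>.const_mul (-γ)).mono_left (nhdsWithin_le_nhds (s := Ioi 0))
      simpa using h
    · have := h1 z hz
      rw [mul_div_assoc'] at this
      exact (div_pos_iff_of_pos_right hz.1).1 this
  have h2γ : 0 < 2 + γ := by linarith [hγ.1]
  have h4γ : 0 < 4 + γ := by linarith [hγ.1]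
  have : -((phi γ x - phi γ (-x)) / (γ*(2+γ)*(4+γ)*x^4))
      = -γ * (phi γ x - phi γ (-x)) / (γ^2*(2+γ)*(4+γ)*x^4) := by
    field_simp
  rw [F2d_eq_phi hx.2, this]
  have := hx.1
  positivity

lemma F2d_pos (hγ : γ ∈ Ioo (-1) 1) (hγ0 : γ ≠ 0) (hx : 0 < x) (hx1 : x ≠ 1) :
    0 < F2d γ x := by
  rcases hx1.lt_or_gt with hx1 | hx1
  · exact F2d_pos_of_lt_one hγ hγ0 ⟨hx, hx1⟩
  · have h := F2d_pos_of_lt_one hγ hγ0 ⟨one_div_pos.2 hx, (div_lt_one hx).2 hx1⟩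
    rw [F2d_one_div hx] at h
    exact pos_of_mul_pos_right h (rpow_pos_of_pos hx _).le

end Positivity

/-- Properties of the auxiliary function `F_{2,γ}` for `γ ∈ (-1,0) ∪ (0,1)`:
(i) the derivative formula, (ii) the symmetry `F'(1/t) = t^{4-γ} F'(t)`,
(iii) vanishing limits at `0+`, (iv) the limit `2(2-γ)/(3(1+γ))` at `+∞`,
(v) strict positivity of `F'` on `(0,∞)`, (vi) the ODE
`t F_{2,γ}'(t) - (1+γ) F_{2,γ}(t) = t⁻¹ F_{1,γ}'(t) - 2(2-γ)/3`. -/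
theorem F2_properties (γ : ℝ) (hγ : γ ∈ Ioo (-1:ℝ) 1) (hγ0 : γ ≠ 0) :
    (∀ t : ℝ, 0 < t → t ≠ 1 → HasDerivAt (F2 γ) (F2d γ t) t) ∧
    (∀ t : ℝ, 0 < t → t ≠ 1 → F2d γ (1/t) = t ^ (4 - γ) * F2d γ t) ∧
    (Tendsto (F2 γ) (nhdsWithin 0 (Ioi 0)) (nhds 0) ∧
      Tendsto (F2d γ) (nhdsWithin 0 (Ioi 0)) (nhds 0)) ∧
    Tendsto (F2 γ) atTop (nhds (2*(2-γ)/(3*(1+γ)))) ∧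
    (∀ t : ℝ, 0 < t → t ≠ 1 → 0 < F2d γ t) ∧
    (∀ t : ℝ, 0 < t → t ≠ 1 →
      t * deriv (F2 γ) t - (1+γ) * F2 γ t = t⁻¹ * deriv (F1 γ) t - 2*(2-γ)/3) := by
  have hF2 : ∀ t : ℝ, 0 < t → t ≠ 1 → HasDerivAt (F2 γ) (F2d γ t) t :=
    fun t ht ht1 => hasDerivAt_F2 hγ.1 hγ0 ht ht1
  refine ⟨hF2, fun t ht _ => F2d_one_div ht,
    ⟨tendsto_F2_nhdsGT_zero γ, tendsto_F2d_nhdsGT_zero γ⟩,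
    tendsto_F2_atTop hγ.1 (by linarith [hγ.2]) hγ0, fun t ht ht1 => F2d_pos hγ hγ0 ht ht1,
    fun t ht ht1 => ?_⟩
  rw [(hF2 t ht ht1).deriv, (hasDerivAt_F1 hγ.1 hγ0 ht ht1).deriv]
  exact F2d_ode hγ.1 hγ0 ht

end GSQGaux
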